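/- For m | n, the function γ_{m,n}: π₁(Y, x₀) → π₁(Y, x₀), γ_{m,n}(θ) = θ ∗ f^{mω}(θ) ∗ f^{2mω}(θ) ∗ ⋯ ∗ f^{(n−m)ω}(θ), induces a well-defined function [γ_{m,n}]: R_B(f^m; x₀, m(ω)) → R_B(f^n; x₀, n(ω)). Moreover, if k | m | n then [γ_{m,n}] ∘ [γ_{k,m}] = [γ_{k,n}]. -/

import Mathlib

open unitInterval

/-- The homotopy lifting property with respect to all spaces (Hurewicz fibration). -/
def IsHurewiczFibration {E B : Type} [TopologicalSpace E] [TopologicalSpace B]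
    (p : C(E, B)) : Prop :=
  ∀ (X : Type) [TopologicalSpace X] (H : C(X × I, B)) (h₀ : C(X, E)),
    (∀ x, H (x, 0) = p (h₀ x)) →
      ∃ H' : C(X × I, E), (∀ x, H' (x, 0) = h₀ x) ∧ ∀ z, p (H' z) = H z

variable {E B : Type} [TopologicalSpace E] [TopologicalSpace B]

/-- Loops at `x₀` lying in the fiber of `p` through `x₀`; they represent elements of
`π₁(Y, x₀)` where `Y = p⁻¹(p x₀)`. -/
def FiberLoop (p : C(E, B)) (x₀ : E) : Type :=
  {θ : Path x₀ x₀ // ∀ t, p (θ t) = p x₀}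

/-- Two fiber loops `θ`, `θ'` are Reidemeister related over `B` (for the fiber map `g` and
base path `w` from `x₀` to `g x₀`) if there are a loop `c` in `E` at `x₀` and a lift `H` of
the homotopy `(t,s) ↦ p (c t)` with `H(t,0) = c(t)`, `H(0,s) = (θ∗w)(s)`, `H(t,1) = g(c(t))`
and `H(1,s) = (θ'∗w)(s)`. -/
def ReidemeisterRelB (p : C(E, B)) (g : C(E, E)) {x₀ : E} (w : Path x₀ (g x₀)) :
    FiberLoop p x₀ → FiberLoop p x₀ → Prop := fun θ θ' =>
  ∃ (c : Path x₀ x₀) (H : C(I × I, E)),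
    (∀ t, H (t, 0) = c t) ∧
    (∀ s, H (0, s) = (θ.1.trans w) s) ∧
    (∀ t, H (t, 1) = g (c t)) ∧
    (∀ s, H (1, s) = (θ'.1.trans w) s) ∧
    (∀ t s, p (H (t, s)) = p (c t))

/-- The set of Reidemeister classes over `B`. -/
def ReidemeisterSetB (p : C(E, B)) (g : C(E, E)) {x₀ : E} (w : Path x₀ (g x₀)) : Type :=
  Quot (ReidemeisterRelB p g w)

/-- The `n`-th iterate of a continuous self-map, as a continuous map. -/
def iterC (f : C(E, E)) (n : ℕ) : C(E, E) := ⟨(⇑f)^[n], f.continuous.iterate n⟩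

/-- The path `n(ω) = ω ∗ f(ω) ∗ ⋯ ∗ f^{n−1}(ω)` from `x₀` to `f^n(x₀)`. -/
noncomputable def nPath (f : C(E, E)) {x₀ : E} (ω : Path x₀ (f x₀)) : (n : ℕ) → Path x₀ ((⇑f)^[n] x₀)
  | 0 => Path.refl x₀
  | 1 => ω
  | (n + 2) => (nPath f ω (n + 1)).trans (ω.map (f.continuous.iterate (n + 1)))

theorem fiber_iterate {p : C(E, B)} {f : C(E, E)} (hf : ∀ x, p (f x) = p x) :
    ∀ (k : ℕ) (x : E), p ((⇑f)^[k] x) = p x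
  | 0, _ => rfl
  | (k + 1), x => by
      rw [Function.iterate_succ_apply, fiber_iterate hf k (f x), hf x]

theorem fiber_trans {p : C(E, B)} {x₀ a b c : E} {γ : Path a b} {δ : Path b c}
    (hγ : ∀ t, p (γ t) = p x₀) (hδ : ∀ t, p (δ t) = p x₀) :
    ∀ t, p ((γ.trans δ) t) = p x₀ := by
  intro t
  rw [Path.trans_apply]
  split_ifs <;> first | exact hγ _ | exact hδ _

theorem fiber_symm {p : C(E, B)} {x₀ a b : E} {γ : Path a b}
    (hγ : ∀ t, p (γ t) = p x₀) : ∀ t, p (γ.symm t) = p x₀ := fun _ => hγ _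

theorem fiber_map {p : C(E, B)} {f : C(E, E)} (hf : ∀ x, p (f x) = p x) {x₀ a b : E}
    {γ : Path a b} (hγ : ∀ t, p (γ t) = p x₀) (k : ℕ) :
    ∀ t, p ((γ.map (f.continuous.iterate k)) t) = p x₀ := fun t => by
  show p ((⇑f)^[k] (γ t)) = p x₀
  rw [fiber_iterate hf k, hγ]

theorem fiber_nPath {p : C(E, B)} {f : C(E, E)} (hf : ∀ x, p (f x) = p x) {x₀ : E}
    {ω : Path x₀ (f x₀)} (hω : ∀ t, p (ω t) = p x₀) :
    ∀ (n : ℕ) (t : I), p (nPath f ω n t) = p x₀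
  | 0, _ => rfl
  | 1, t => hω t
  | (n + 2), t => by
      simp only [nPath]
      exact fiber_trans (fiber_nPath hf hω (n + 1)) (fiber_map hf hω (n + 1)) t

/-- The loop `f^{kω}(θ) = k(ω) ∗ f^k(θ) ∗ k(ω)⁻¹` at `x₀`. -/
noncomputable def fpowLoop (f : C(E, E)) {x₀ : E} (ω : Path x₀ (f x₀)) (k : ℕ) (θ : Path x₀ x₀) :
    Path x₀ x₀ :=
  ((nPath f ω k).trans (θ.map (f.continuous.iterate k))).trans (nPath f ω k).symm

/-- `f^{kω}` applied to a fiber loop is again a fiber loop. -/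
noncomputable def fpowFiberLoop (p : C(E, B)) (f : C(E, E)) (hf : ∀ x, p (f x) = p x) {x₀ : E}
    (ω : Path x₀ (f x₀)) (hω : ∀ t, p (ω t) = p x₀) (k : ℕ) (θ : FiberLoop p x₀) :
    FiberLoop p x₀ :=
  ⟨fpowLoop f ω k θ.1,
    fiber_trans (fiber_trans (fiber_nPath hf hω k) (fiber_map hf θ.2 k))
      (fiber_symm (fiber_nPath hf hω k))⟩

/-- Auxiliary product `f^{0·mω}(θ) ∗ f^{1·mω}(θ) ∗ ⋯ ∗ f^{(j−1)·mω}(θ)`. -/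
noncomputable def gammaAux (f : C(E, E)) {x₀ : E} (ω : Path x₀ (f x₀)) (m : ℕ) (θ : Path x₀ x₀) :
    ℕ → Path x₀ x₀
  | 0 => Path.refl x₀
  | (j + 1) => (gammaAux f ω m θ j).trans (fpowLoop f ω (j * m) θ)

/-- The loop `γ_{m,n}(θ) = θ ∗ f^{mω}(θ) ∗ f^{2mω}(θ) ∗ ⋯ ∗ f^{(n−m)ω}(θ)`. -/
noncomputable def gammaLoop (f : C(E, E)) {x₀ : E} (ω : Path x₀ (f x₀)) (m n : ℕ) (θ : Path x₀ x₀) :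
    Path x₀ x₀ :=
  gammaAux f ω m θ (n / m)

theorem fiber_gammaAux {p : C(E, B)} {f : C(E, E)} (hf : ∀ x, p (f x) = p x) {x₀ : E}
    {ω : Path x₀ (f x₀)} (hω : ∀ t, p (ω t) = p x₀) (m : ℕ) (θ : FiberLoop p x₀) :
    ∀ (j : ℕ) (t : I), p (gammaAux f ω m θ.1 j t) = p x₀
  | 0, _ => rfl
  | (j + 1), t => by
    simp only [gammaAux]
    exact fiber_trans (fiber_gammaAux hf hω m θ j)
      (fpowFiberLoop p f hf ω hω (j * m) θ).2 t

/-- `γ_{m,n}` applied to a fiber loop is again a fiber loop. -/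
noncomputable def gammaFiberLoop (p : C(E, B)) (f : C(E, E)) (hf : ∀ x, p (f x) = p x) {x₀ : E}
    (ω : Path x₀ (f x₀)) (hω : ∀ t, p (ω t) = p x₀) (m n : ℕ) (θ : FiberLoop p x₀) :
    FiberLoop p x₀ :=
  ⟨gammaLoop f ω m n θ.1, fiber_gammaAux hf hω m θ (n / m)⟩

/-- `F` realizes the induced function `[f^ω]` on the Reidemeister classes of `f^n` over `B`. -/
def IsFOmegaMap (p : C(E, B)) (f : C(E, E)) (hf : ∀ x, p (f x) = p x) {x₀ : E}
    (ω : Path x₀ (f x₀)) (hω : ∀ t, p (ω t) = p x₀) (n : ℕ)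
    (F : ReidemeisterSetB p (iterC f n) (nPath f ω n) →
      ReidemeisterSetB p (iterC f n) (nPath f ω n)) : Prop :=
  ∀ θ : FiberLoop p x₀,
    F (Quot.mk _ θ) = Quot.mk _ (fpowFiberLoop p f hf ω hω 1 θ)

/-- `G` realizes the induced function `[γ_{m,n}]` from the Reidemeister classes of `f^m`
to those of `f^n` over `B`. -/
def IsGammaMap (p : C(E, B)) (f : C(E, E)) (hf : ∀ x, p (f x) = p x) {x₀ : E}
    (ω : Path x₀ (f x₀)) (hω : ∀ t, p (ω t) = p x₀) (m n : ℕ)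
    (G : ReidemeisterSetB p (iterC f m) (nPath f ω m) →
      ReidemeisterSetB p (iterC f n) (nPath f ω n)) : Prop :=
  ∀ θ : FiberLoop p x₀,
    G (Quot.mk _ θ) = Quot.mk _ (gammaFiberLoop p f hf ω hω m n θ)

/-- Fixed points of a continuous self-map. -/
def FixPt (g : C(E, E)) : Type := {x : E // g x = x}

/-- Nielsen equivalence over `B` of fixed points of `g`. -/
def NielsenRelB (p : C(E, B)) (g : C(E, E)) : FixPt g → FixPt g → Prop := fun x y =>
  ∃ (lam : Path x.1 y.1) (H : C(I × I, E)),
    (∀ t, H (t, 0) = lam t) ∧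
    (∀ t, H (t, 1) = g (lam t)) ∧
    (∀ s, H (0, s) = x.1) ∧
    (∀ s, H (1, s) = y.1) ∧
    (∀ t s, p (H (t, s)) = p (lam t))

/-- The set of Nielsen classes over `B`. -/
def NielsenSetB (p : C(E, B)) (g : C(E, E)) : Type := Quot (NielsenRelB p g)

/-- The space `E_B(g) = {(x, α) : p∘α const, α(0) = x, α(1) = g(x)}` with the topology
induced from `E × C(I, E)` (compact-open topology on paths). -/
def EBSpace (p : C(E, B)) (g : C(E, E)) : Type :=
  {z : E × C(I, E) // (∀ t, p (z.2 t) = p z.1) ∧ z.2 0 = z.1 ∧ z.2 1 = g z.1}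

instance (p : C(E, B)) (g : C(E, E)) : TopologicalSpace (EBSpace p g) :=
  instTopologicalSpaceSubtype

/-- Path components of a space. -/
def Pi0 (X : Type) [TopologicalSpace X] : Type := Quot (@Joined X _)

/-- The map `g_B : Fix(g) → E_B(g)`, `x ↦ (x, constant path at x)`. -/
def gBMap (p : C(E, B)) (g : C(E, E)) (x : FixPt g) : EBSpace p g :=
  ⟨(x.1, ContinuousMap.const I x.1), fun _ => rfl, rfl, x.2.symm⟩

instance (g : C(E, E)) : TopologicalSpace (FixPt g) := instTopologicalSpaceSubtype

/-- The Reidemeister class over `B` of a fiber loop. -/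
def rClass (p : C(E, B)) (g : C(E, E)) {x₀ : E} (w : Path x₀ (g x₀)) (θ : FiberLoop p x₀) :
    ReidemeisterSetB p g w := Quot.mk _ θ

/-- The Nielsen class over `B` of a fixed point. -/
def nClass (p : C(E, B)) {g : C(E, E)} (x : FixPt g) : NielsenSetB p g := Quot.mk _ x

/-- The path component of a point. -/
def piComp {X : Type} [TopologicalSpace X] (x : X) : Pi0 X := Quot.mk _ x

/-- A Reidemeister class of `f^n` over `B` is reducible to `m` if it lies in the image of
the induced function `[γ_{m,n}]`. -/
def ReducibleTo (p : C(E, B)) (f : C(E, E)) (hf : ∀ x, p (f x) = p x) {x₀ : E}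
    (ω : Path x₀ (f x₀)) (hω : ∀ t, p (ω t) = p x₀) (n m : ℕ)
    (a : ReidemeisterSetB p (iterC f n) (nPath f ω n)) : Prop :=
  ∃ G : ReidemeisterSetB p (iterC f m) (nPath f ω m) →
      ReidemeisterSetB p (iterC f n) (nPath f ω n),
    IsGammaMap p f hf ω hω m n G ∧ a ∈ Set.range G

/-!
Write `F` for the endomorphism `f^ω` of `π₁(Y, x₀)`. Since `(a+1)(ω) = a(ω) ∗ f^a(ω)`, one has
`f^{(a+1)ω} = f^{aω} ∘ f^ω` on the nose, hence `f^{aω} = F^a` and `γ_{m,n}(θ)` is the twisted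
product `θ · G θ ⋯ G^{q-1} θ` with `G = F^m`, `q = n/m`. The composition rule is then the twisted
form of `(1 + G + ⋯ + G^{r-1})(1 + G^r + ⋯ + G^{r(q-1)}) = 1 + G + ⋯ + G^{rq-1}`.

For well-definedness, a lift `H` exhibiting `θ ~ θ'` for `f^m` is stacked with `f^m ∘ H`,
`f^{2m} ∘ H`, …, `f^{n-m} ∘ H`. This is a lift exhibiting the relation for `f^n` between the
concatenations of the paths `f^{jm}(θ ∗ m(ω))` and `f^{jm}(θ' ∗ m(ω))`, and in the fiber these
concatenations are homotopic to `γ_{m,n}(θ) ∗ n(ω)` and `γ_{m,n}(θ') ∗ n(ω)`. Homotopies in the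
fiber are absorbed into the lift by gluing them to its sides.
-/

open CategoryTheory

section OrbitProd

variable {M : Type*} [Monoid M]

/-- `orbitProd G x j = G^{j-1} x * ⋯ * G x * x`. Multiplication in `FundamentalGroup` composes
right to left, so there this is the concatenation `x ∗ G x ∗ ⋯ ∗ G^{j-1} x`. -/
def orbitProd (G : Monoid.End M) (x : M) : ℕ → M
  | 0 => 1
  | j + 1 => (G ^ j) x * orbitProd G x j

theorem orbitProd_add (G : Monoid.End M) (x : M) (a b : ℕ) :
    orbitProd G x (a + b) = (G ^ a) (orbitProd G x b) * orbitProd G x a := by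
  induction b with
  | zero => simp [orbitProd]
  | succ b ih =>
    rw [← add_assoc, orbitProd, ih, orbitProd, map_mul, pow_add, Monoid.End.coe_mul,
      Function.comp_apply, mul_assoc]

theorem orbitProd_orbitProd (G : Monoid.End M) (x : M) (r q : ℕ) :
    orbitProd (G ^ r) (orbitProd G x r) q = orbitProd G x (r * q) := by
  induction q with
  | zero => rfl
  | succ q ih => rw [orbitProd, ih, ← pow_mul, mul_add_one, orbitProd_add]

end OrbitProd

theorem Nat.div_mul_div_of_dvd_of_dvd {k m n : ℕ} (hkm : k ∣ m) (hmn : m ∣ n) :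
    m / k * (n / m) = n / k := by
  rcases Nat.eq_zero_or_pos m with rfl | hm
  · simp [Nat.eq_zero_of_zero_dvd hmn]
  · rw [Nat.div_mul_div_comm hkm hmn, Nat.mul_comm k, Nat.mul_div_mul_left _ _ hm]

section PathClass

variable {X : Type} [TopologicalSpace X]

def pathClass {a b : X} (γ : Path a b) : FundamentalGroupoid.mk a ⟶ FundamentalGroupoid.mk b :=
  Path.Homotopic.Quotient.mk γ

@[simp] theorem pathClass_trans {a b c : X} (γ : Path a b) (δ : Path b c) :
    pathClass (γ.trans δ) = pathClass γ ≫ pathClass δ := rfl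

@[simp] theorem pathClass_symm {a b : X} (γ : Path a b) :
    pathClass γ.symm = inv (pathClass γ) := by
  rw [← Groupoid.inv_eq_inv]
  rfl

@[simp] theorem pathClass_refl (a : X) : pathClass (Path.refl a) = 𝟙 _ := rfl

theorem pathClass_eq_iff {a b : X} {γ δ : Path a b} :
    pathClass γ = pathClass δ ↔ γ.Homotopic δ :=
  Path.Homotopic.Quotient.eq

theorem pathClass_cast {a b a' b' : X} (γ : Path a b) (ha : a' = a) (hb : b' = b) :
    pathClass (γ.cast ha hb) = eqToHom (by rw [ha]) ≫ pathClass γ ≫ eqToHom (by rw [hb]) :=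
  (FundamentalGroupoid.conj_eqToHom (p := pathClass γ) ha hb).symm

theorem pathClass_eq_of_apply_eq {a b a' b' : X} {γ : Path a b} {δ : Path a' b'}
    (h : ∀ t, γ t = δ t) :
    pathClass γ = eqToHom (by rw [← γ.source, h, δ.source]) ≫ pathClass δ ≫
      eqToHom (by rw [← δ.target, ← h, γ.target]) := by
  obtain rfl : a = a' := by rw [← γ.source, h, δ.source]
  obtain rfl : b = b' := by rw [← γ.target, h, δ.target]
  obtain rfl : γ = δ := Path.ext (funext h)
  simp

end PathClass

section Twist

variable {X : Type} [TopologicalSpace X] (φ : C(X, X)) {x₀ : X} (ω : Path x₀ (φ x₀))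

theorem pathClass_map_nPath_succ {Y : Type} [TopologicalSpace Y] {g : X → Y} (hg : Continuous g)
    (a : ℕ) :
    pathClass ((nPath φ ω (a + 1)).map hg) =
      pathClass ((nPath φ ω a).map hg) ≫ pathClass ((ω.map (φ.continuous.iterate a)).map hg) := by
  cases a with
  | zero => exact (Category.id_comp _).symm
  | succ a => exact congrArg pathClass (Path.map_trans _ _ hg)

theorem pathClass_nPath_succ (a : ℕ) :
    pathClass (nPath φ ω (a + 1)) =
      pathClass (nPath φ ω a) ≫ pathClass (ω.map (φ.continuous.iterate a)) := by
  cases a with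
  | zero => exact (Category.id_comp _).symm
  | succ a => rfl

/-- The endomorphism `f^ω` of `π₁(X, x₀)`. -/
noncomputable def twist : Monoid.End (FundamentalGroup X x₀) :=
  (FundamentalGroup.fundamentalGroupMulEquivOfPath ω.symm).toMonoidHom.comp
    (FundamentalGroup.map φ x₀)

theorem twist_pathClass (θ : Path x₀ x₀) :
    twist φ ω (pathClass θ) = pathClass (fpowLoop φ ω 1 θ) := by
  change Groupoid.inv (pathClass ω.symm) ≫ pathClass (θ.map φ.continuous) ≫ pathClass ω.symm = _
  simp [fpowLoop, nPath]

theorem pathClass_fpowLoop_succ (a : ℕ) (θ : Path x₀ x₀) :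
    pathClass (fpowLoop φ ω (a + 1) θ) = pathClass (fpowLoop φ ω a (fpowLoop φ ω 1 θ)) := by
  simp only [fpowLoop, pathClass_trans, pathClass_symm, pathClass_nPath_succ, Path.map_trans,
    ← Path.map_symm, Path.map_map]
  simp
  rfl

theorem pathClass_fpowLoop (a : ℕ) (θ : Path x₀ x₀) :
    pathClass (fpowLoop φ ω a θ) = (twist φ ω ^ a) (pathClass θ) := by
  induction a generalizing θ with
  | zero => simp [fpowLoop, nPath]
  | succ a ih =>
    rw [pathClass_fpowLoop_succ, ih, pow_succ, Monoid.End.coe_mul, Function.comp_apply,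
      twist_pathClass]

theorem pathClass_gammaAux (k : ℕ) (θ : Path x₀ x₀) (j : ℕ) :
    pathClass (gammaAux φ ω k θ j) = orbitProd (twist φ ω ^ k) (pathClass θ) j := by
  induction j with
  | zero => rfl
  | succ j ih =>
    rw [gammaAux, pathClass_trans, ih, pathClass_fpowLoop, orbitProd, ← pow_mul, mul_comm]
    rfl

theorem twist_iterC (m : ℕ) : twist (iterC φ m) (nPath φ ω m) = twist φ ω ^ m := by
  ext α
  induction α using Path.Homotopic.Quotient.ind with
  | mk θ => exact (twist_pathClass _ _ θ).trans (pathClass_fpowLoop φ ω m θ)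

theorem pathClass_nPath_trans {g : C(X, X)} (w : Path x₀ (g x₀)) (θ : Path x₀ x₀) (q : ℕ) :
    pathClass (nPath g (θ.trans w) q) =
      (orbitProd (twist g w) (pathClass θ) q : FundamentalGroup X x₀) ≫
        pathClass (nPath g w q) := by
  induction q with
  | zero => simp [nPath, orbitProd]
  | succ q ih =>
    rw [pathClass_nPath_succ, ih, pathClass_nPath_succ, orbitProd, End.mul_def,
      ← pathClass_fpowLoop, Path.map_trans]
    simp [fpowLoop]

theorem pathClass_nPath_add (a b : ℕ) :
    pathClass (nPath φ ω (a + b)) = pathClass (nPath φ ω a) ≫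
      pathClass ((nPath φ ω b).map (φ.continuous.iterate a)) ≫
        eqToHom (by rw [Function.iterate_add_apply]) := by
  induction b with
  | zero => simp [nPath]; exact (Category.comp_id _).symm
  | succ b ih =>
    change pathClass (nPath φ ω (a + b + 1)) = _
    rw [pathClass_nPath_succ, ih, pathClass_map_nPath_succ, Path.map_map,
      pathClass_eq_of_apply_eq (γ := ω.map ((φ.continuous.iterate a).comp (φ.continuous.iterate b)))
        (δ := ω.map (φ.continuous.iterate (a + b)))
        fun t => (Function.iterate_add_apply _ _ _ _).symm]
    simp
    -- the leftover `eqToHom`s cancel, but their middle objects agree only up to unfolding iterates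
    erw [eqToHom_trans, eqToHom_refl, Category.comp_id]
    rfl

theorem pathClass_nPath_iterC (m q : ℕ) :
    pathClass (nPath (iterC φ m) (nPath φ ω m) q) =
      pathClass (nPath φ ω (m * q)) ≫ eqToHom (by rw [Function.iterate_mul]; rfl) := by
  induction q with
  | zero => simp [nPath]
  | succ q ih =>
    rw [pathClass_nPath_succ (iterC φ m) (nPath φ ω m) q, ih]
    change _ = pathClass (nPath φ ω (m * q + m)) ≫ _
    rw [pathClass_nPath_add, pathClass_eq_of_apply_eq (γ := (nPath φ ω m).map _)
      (δ := (nPath φ ω m).map ((iterC φ m).continuous.iterate q))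
      fun t => congrFun (Function.iterate_mul φ m q) _]
    simp
    erw [eqToHom_trans, eqToHom_refl, Category.comp_id]
    rfl

theorem nPath_iterC_trans_homotopic (m q : ℕ) (θ : Path x₀ x₀) :
    (nPath (iterC φ m) (θ.trans (nPath φ ω m)) q).Homotopic
      (((gammaAux φ ω m θ q).trans (nPath φ ω (m * q))).cast rfl
        (by rw [Function.iterate_mul]; rfl)) := by
  rw [← pathClass_eq_iff, pathClass_cast,
    pathClass_nPath_trans (g := iterC φ m) (nPath φ ω m), twist_iterC, pathClass_nPath_iterC,
    pathClass_trans, pathClass_gammaAux]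
  simp

theorem gammaLoop_gammaLoop_homotopic {k m n : ℕ} (hkm : k ∣ m) (hmn : m ∣ n)
    (θ : Path x₀ x₀) :
    (gammaLoop φ ω m n (gammaLoop φ ω k m θ)).Homotopic (gammaLoop φ ω k n θ) := by
  rw [← pathClass_eq_iff, gammaLoop, gammaLoop, gammaLoop, pathClass_gammaAux, pathClass_gammaAux,
    pathClass_gammaAux, ← Nat.mul_div_cancel' hkm, pow_mul, Nat.mul_div_cancel' hkm,
    orbitProd_orbitProd, Nat.div_mul_div_of_dvd_of_dvd hkm hmn]

end Twist

section Naturality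

variable {X Y : Type} [TopologicalSpace X] [TopologicalSpace Y] {ι : X → Y}

theorem comp_path_trans {a b c : X} {a' b' c' : Y} {γ : Path a b} {δ : Path b c}
    {γ' : Path a' b'} {δ' : Path b' c'} (hγ : ι ∘ γ = γ') (hδ : ι ∘ δ = δ') :
    ι ∘ γ.trans δ = γ'.trans δ' := by
  funext t
  simp only [Function.comp_apply, Path.trans_apply]
  split_ifs
  exacts [congrFun hγ _, congrFun hδ _]

theorem comp_path_symm {a b : X} {a' b' : Y} {γ : Path a b} {γ' : Path a' b'} (hγ : ι ∘ γ = γ') :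
    ι ∘ γ.symm = γ'.symm :=
  funext fun t => congrFun hγ (σ t)

variable {φ : C(X, X)} {f : C(Y, Y)} (h : Function.Semiconj ι φ f)
include h

theorem comp_path_map_iterate {a b : X} {a' b' : Y} {γ : Path a b} {γ' : Path a' b'}
    (hγ : ι ∘ γ = γ') (k : ℕ) :
    ι ∘ γ.map (φ.continuous.iterate k) = γ'.map (f.continuous.iterate k) := by
  funext t
  simp only [Function.comp_apply, Path.map_coe, ← hγ, (h.iterate_right k).eq]

variable {x₀ : X} {y₀ : Y} {ω : Path x₀ (φ x₀)} {ω' : Path y₀ (f y₀)} (hω : ι ∘ ω = ω')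
include hω

theorem comp_nPath : ∀ n, ι ∘ nPath φ ω n = nPath f ω' n
  | 0 => funext fun _ => show ι x₀ = y₀ by simpa using congrFun hω 0
  | 1 => hω
  | n + 2 => comp_path_trans (comp_nPath (n + 1)) (comp_path_map_iterate h hω (n + 1))

theorem comp_fpowLoop {θ : Path x₀ x₀} {θ' : Path y₀ y₀} (hθ : ι ∘ θ = θ') (k : ℕ) :
    ι ∘ fpowLoop φ ω k θ = fpowLoop f ω' k θ' :=
  comp_path_trans (comp_path_trans (comp_nPath h hω k) (comp_path_map_iterate h hθ k))
    (comp_path_symm (comp_nPath h hω k))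

theorem comp_gammaAux {θ : Path x₀ x₀} {θ' : Path y₀ y₀} (hθ : ι ∘ θ = θ') (m : ℕ) :
    ∀ j, ι ∘ gammaAux φ ω m θ j = gammaAux f ω' m θ' j
  | 0 => funext fun _ => show ι x₀ = y₀ by simpa using congrFun hω 0
  | j + 1 => comp_path_trans (comp_gammaAux hθ m j) (comp_fpowLoop h hω hθ (j * m))

end Naturality

theorem iterC_iterC (f : C(E, E)) (m q : ℕ) : iterC (iterC f m) q = iterC f (m * q) :=
  ContinuousMap.ext fun x => (congrFun (Function.iterate_mul f m q) x).symm

section TwistedHomotopy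

/-- A path from `α` to `β` in the space `E_B(g)`: a homotopy through paths `H(t, ·)` from `H(t, 0)`
to `g (H(t, 0))`, each lying in one fiber of `p`. The loop `c` of `ReidemeisterRelB` is the bottom
edge `H(·, 0)`. -/
def TwistedHomotopic (p : C(E, B)) (g : C(E, E)) (α β : C(I, E)) : Prop :=
  ∃ H : α.Homotopy β, ∀ t s, H (t, 1) = g (H (t, 0)) ∧ p (H (t, s)) = p (H (t, 0))

variable {p : C(E, B)} {g : C(E, E)}

theorem reidemeisterRelB_iff {x₀ : E} {w : Path x₀ (g x₀)} {θ θ' : FiberLoop p x₀} :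
    ReidemeisterRelB p g w θ θ' ↔ TwistedHomotopic p g (θ.1.trans w) (θ'.1.trans w) := by
  constructor
  · rintro ⟨c, H, hc, hθ, hgc, hθ', hp⟩
    exact ⟨⟨H, hθ, hθ'⟩, fun t s =>
      ⟨(hgc t).trans (congrArg g (hc t).symm), (hp t s).trans (congrArg p (hc t)).symm⟩⟩
  · rintro ⟨H, hH⟩
    let c : Path x₀ x₀ :=
      { toFun := fun t => H (t, 0)
        continuous_toFun := by fun_prop
        source' := by simp
        target' := by simp }
    exact ⟨c, H.toContinuousMap, fun _ => rfl, H.apply_zero, fun t => (hH t 1).1, H.apply_one,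
      fun t s => (hH t s).2⟩

theorem TwistedHomotopic.symm {α β : C(I, E)} (h : TwistedHomotopic p g α β) :
    TwistedHomotopic p g β α := by
  obtain ⟨H, hH⟩ := h
  exact ⟨H.symm, fun t s => hH (σ t) s⟩

theorem TwistedHomotopic.trans {α β γ : C(I, E)} (h₁ : TwistedHomotopic p g α β)
    (h₂ : TwistedHomotopic p g β γ) : TwistedHomotopic p g α γ := by
  obtain ⟨H₁, hH₁⟩ := h₁
  obtain ⟨H₂, hH₂⟩ := h₂
  refine ⟨H₁.trans H₂, fun t s => ?_⟩
  simp only [ContinuousMap.Homotopy.trans_apply]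
  split_ifs
  exacts [hH₁ _ s, hH₂ _ s]

theorem TwistedHomotopic.of_homotopic {b : B} {y₁ y₂ : {x // p x = b}} {α' β' : Path y₁ y₂}
    (h : α'.Homotopic β') (hy : (y₂ : E) = g y₁) {α β : C(I, E)} (hα : Subtype.val ∘ α' = α)
    (hβ : Subtype.val ∘ β' = β) : TwistedHomotopic p g α β := by
  obtain ⟨F⟩ := h
  refine ⟨⟨⟨fun z => F z, by fun_prop⟩, fun s => ?_, fun s => ?_⟩, fun t s => ⟨?_, ?_⟩⟩
  · exact (congrArg Subtype.val (F.apply_zero s)).trans (congrFun hα s)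
  · exact (congrArg Subtype.val (F.apply_one s)).trans (congrFun hβ s)
  · change (F (t, 1) : E) = g (F (t, 0))
    rw [F.source, F.target, hy]
  · exact (F (t, s)).2.trans (F (t, 0)).2.symm

theorem continuous_uncurry_nPath {T : Type} [TopologicalSpace T] {a : T → E}
    (P : ∀ t, Path (a t) (g (a t))) (hP : Continuous ↿P) :
    ∀ j, Continuous ↿fun t => nPath g (P t) j
  | 0 => (hP.comp (continuous_fst.prodMk continuous_const)).congr fun z => (P z.1).source
  | 1 => hP
  | j + 2 => Path.trans_continuous_family _ (continuous_uncurry_nPath P hP (j + 1)) _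
      ((g.continuous.iterate (j + 1)).comp hP)

/-- Stacking `H, g ∘ H, …, g^{j-1} ∘ H`: the stack at time `t` is `nPath g (H(t, ·)) j`. -/
theorem TwistedHomotopic.nPath_iterC (hg : ∀ x, p (g x) = p x) {a : E} {α β : Path a (g a)}
    (h : TwistedHomotopic p g α β) (j : ℕ) :
    TwistedHomotopic p (iterC g j) (nPath g α j) (nPath g β j) := by
  obtain ⟨H, hH⟩ := h
  let P : ∀ t, Path (H (t, 0)) (g (H (t, 0))) := fun t =>
    { toFun := fun s => H (t, s)
      continuous_toFun := by fun_prop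
      source' := rfl
      target' := (hH t 0).1 }
  have hP₀ : id ∘ P 0 = α := funext H.apply_zero
  have hP₁ : id ∘ P 1 = β := funext H.apply_one
  refine ⟨⟨⟨↿fun t => nPath g (P t) j, continuous_uncurry_nPath P H.continuous j⟩,
    fun s => ?_, fun s => ?_⟩, fun t s => ⟨?_, ?_⟩⟩
  · exact congrFun (comp_nPath .id_left hP₀ j) s
  · exact congrFun (comp_nPath .id_left hP₁ j) s
  · change nPath g (P t) j 1 = (iterC g j) (nPath g (P t) j 0)
    rw [Path.source, Path.target]
    rfl
  · change p (nPath g (P t) j s) = p (nPath g (P t) j 0)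
    rw [Path.source]
    exact fiber_nPath hg (fun s => (hH t s).2) j s

end TwistedHomotopy

section Fiber

variable {p : C(E, B)}

def fiberRestrict {f : C(E, E)} (hf : ∀ x, p (f x) = p x) (b : B) :
    C({x // p x = b}, {x // p x = b}) :=
  ⟨fun y => ⟨f y, (hf y).trans y.2⟩, by fun_prop⟩

def Path.toFiber {b : B} {x y : {e // p e = b}} (γ : Path (x : E) y) (hγ : ∀ t, p (γ t) = b) :
    Path x y where
  toFun t := ⟨γ t, hγ t⟩
  continuous_toFun := by fun_prop
  source' := Subtype.ext γ.source
  target' := Subtype.ext γ.target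

variable {f : C(E, E)} (hf : ∀ x, p (f x) = p x) {x₀ : E} {ω : Path x₀ (f x₀)}
  (hω : ∀ t, p (ω t) = p x₀)
include hf hω

theorem twistedHomotopic_gammaAux_nPath (m q : ℕ) (θ : FiberLoop p x₀) :
    TwistedHomotopic p (iterC f (m * q)) ((gammaAux f ω m θ.1 q).trans (nPath f ω (m * q)))
      (nPath (iterC f m) (θ.1.trans (nPath f ω m)) q) := by
  let y₀ : {x // p x = p x₀} := ⟨x₀, rfl⟩
  let φ := fiberRestrict hf (p x₀)
  have hφ : Function.Semiconj Subtype.val φ f := fun _ => rfl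
  refine .of_homotopic (nPath_iterC_trans_homotopic φ (ω.toFiber (x := y₀) (y := φ y₀) hω) m q
    (θ.1.toFiber (x := y₀) (y := y₀) θ.2)).symm ?_ ?_ ?_
  · exact ((hφ.iterate_right m).iterate_right q).eq y₀ |>.trans
      (congrFun (Function.iterate_mul f m q) x₀).symm
  · exact comp_path_trans (comp_gammaAux hφ rfl rfl m q) (comp_nPath hφ rfl (m * q))
  · exact comp_nPath (hφ.iterate_right m) (comp_path_trans rfl (comp_nPath hφ rfl m)) q

theorem reidemeisterRelB_gammaFiberLoop {m n : ℕ} (hmn : m ∣ n) {θ θ' : FiberLoop p x₀}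
    (h : ReidemeisterRelB p (iterC f m) (nPath f ω m) θ θ') :
    ReidemeisterRelB p (iterC f n) (nPath f ω n)
      (gammaFiberLoop p f hf ω hω m n θ) (gammaFiberLoop p f hf ω hω m n θ') := by
  obtain ⟨q, hq, rfl⟩ : ∃ q, n / m = q ∧ m * q = n := ⟨n / m, rfl, Nat.mul_div_cancel' hmn⟩
  have hstack := (reidemeisterRelB_iff.1 h).nPath_iterC (fiber_iterate hf m) q
  rw [iterC_iterC] at hstack
  refine reidemeisterRelB_iff.2 ?_
  simp only [gammaFiberLoop, gammaLoop, hq]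
  exact ((twistedHomotopic_gammaAux_nPath hf hω m q θ).trans hstack).trans
    (twistedHomotopic_gammaAux_nPath hf hω m q θ').symm

theorem reidemeisterRelB_gammaFiberLoop_comp {k m n : ℕ} (hkm : k ∣ m) (hmn : m ∣ n)
    (θ : FiberLoop p x₀) :
    ReidemeisterRelB p (iterC f n) (nPath f ω n)
      (gammaFiberLoop p f hf ω hω m n (gammaFiberLoop p f hf ω hω k m θ))
      (gammaFiberLoop p f hf ω hω k n θ) := by
  let y₀ : {x // p x = p x₀} := ⟨x₀, rfl⟩
  let φ := fiberRestrict hf (p x₀)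
  have hφ : Function.Semiconj Subtype.val φ f := fun _ => rfl
  let ω' := ω.toFiber (x := y₀) (y := φ y₀) hω
  refine reidemeisterRelB_iff.2 (.of_homotopic ((gammaLoop_gammaLoop_homotopic φ ω' hkm hmn
    (θ.1.toFiber (x := y₀) (y := y₀) θ.2)).hcomp (.refl (nPath φ ω' n))) ?_ ?_ ?_)
  · exact (hφ.iterate_right n).eq y₀
  · exact comp_path_trans (comp_gammaAux hφ rfl (comp_gammaAux hφ rfl rfl k _) m _)
      (comp_nPath hφ rfl n)
  · exact comp_path_trans (comp_gammaAux hφ rfl rfl k _) (comp_nPath hφ rfl n)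

end Fiber

theorem gamma_induced_on_reidemeister_general {E B : Type} [TopologicalSpace E] [TopologicalSpace B]
    (p : C(E, B))
    (f : C(E, E)) (hf : ∀ x, p (f x) = p x)
    (x₀ : E) (ω : Path x₀ (f x₀)) (hω : ∀ t, p (ω t) = p x₀)
    (k m n : ℕ) (hkm : k ∣ m) (hmn : m ∣ n) :
    (∃ G : ReidemeisterSetB p (iterC f m) (nPath f ω m) →
        ReidemeisterSetB p (iterC f n) (nPath f ω n),
      IsGammaMap p f hf ω hω m n G) ∧
    ∀ (Gmn : ReidemeisterSetB p (iterC f m) (nPath f ω m) →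
        ReidemeisterSetB p (iterC f n) (nPath f ω n))
      (Gkm : ReidemeisterSetB p (iterC f k) (nPath f ω k) →
        ReidemeisterSetB p (iterC f m) (nPath f ω m))
      (Gkn : ReidemeisterSetB p (iterC f k) (nPath f ω k) →
        ReidemeisterSetB p (iterC f n) (nPath f ω n)),
      IsGammaMap p f hf ω hω m n Gmn → IsGammaMap p f hf ω hω k m Gkm →
      IsGammaMap p f hf ω hω k n Gkn → Gmn ∘ Gkm = Gkn := by
  refine ⟨⟨Quot.lift (fun θ => Quot.mk _ (gammaFiberLoop p f hf ω hω m n θ))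
    fun _ _ h => Quot.sound (reidemeisterRelB_gammaFiberLoop hf hω hmn h), fun _ => rfl⟩, ?_⟩
  intro Gmn Gkm Gkn hGmn hGkm hGkn
  funext x
  induction x using Quot.ind with
  | mk θ =>
    exact (congrArg Gmn (hGkm θ)).trans <| (hGmn _).trans <|
      (Quot.sound (reidemeisterRelB_gammaFiberLoop_comp hf hω hkm hmn θ)).trans (hGkn θ).symm

theorem gamma_induced_on_reidemeister {E B : Type} [TopologicalSpace E] [TopologicalSpace B]
    [CompactSpace E] [CompactSpace B] [PathConnectedSpace E] [PathConnectedSpace B]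
    [T2Space E] [T2Space B] {dE dB : ℕ}
    [ChartedSpace (EuclideanSpace ℝ (Fin dE)) E]
    [ChartedSpace (EuclideanSpace ℝ (Fin dB)) B]
    (p : C(E, B)) (hp : IsHurewiczFibration p)
    (f : C(E, E)) (hf : ∀ x, p (f x) = p x)
    (x₀ : E) (ω : Path x₀ (f x₀)) (hω : ∀ t, p (ω t) = p x₀)
    (k m n : ℕ) (hk : 0 < k) (hkm : k ∣ m) (hmn : m ∣ n) :
    (∃ G : ReidemeisterSetB p (iterC f m) (nPath f ω m) →
        ReidemeisterSetB p (iterC f n) (nPath f ω n),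
      IsGammaMap p f hf ω hω m n G) ∧
    ∀ (Gmn : ReidemeisterSetB p (iterC f m) (nPath f ω m) →
        ReidemeisterSetB p (iterC f n) (nPath f ω n))
      (Gkm : ReidemeisterSetB p (iterC f k) (nPath f ω k) →
        ReidemeisterSetB p (iterC f m) (nPath f ω m))
      (Gkn : ReidemeisterSetB p (iterC f k) (nPath f ω k) →
        ReidemeisterSetB p (iterC f n) (nPath f ω n)),
      IsGammaMap p f hf ω hω m n Gmn → IsGammaMap p f hf ω hω k m Gkm →
      IsGammaMap p f hf ω hω k n Gkn → Gmn ∘ Gkm = Gkn :=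
  gamma_induced_on_reidemeister_general p f hf x₀ ω hω k m n hkm hmn
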